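/- arXiv:2108.12544 — 5 statements merged into one kernel-verified Lean document; each statement's English description precedes it below -/
import Mathlib

section
/- Let C be an [n,k] code over F_q with generator matrix G. Then C is an LCD code (i.e., C ∩ C⊥ = {0}) if and only if the k×k matrix G·Gᵀ is nonsingular. -/
open Matrix

/-- The dual code of a linear code `C`, with respect to the standard inner product. -/
def dualCode {F : Type*} [Field F] {ι : Type*} [Fintype ι]
    (C : Submodule F (ι → F)) : Submodule F (ι → F) where
  carrier := {x | ∀ c ∈ C, x ⬝ᵥ c = 0}
  zero_mem' := by intro c hc; simp
  add_mem' := by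
    intro a b ha hb c hc
    simp [add_dotProduct, ha c hc, hb c hc]
  smul_mem' := by
    intro t a ha c hc
    simp [smul_dotProduct, ha c hc]

/-! Every codeword of `C` is `v ᵥ* G`, and it is orthogonal to `C` iff it is orthogonal to the rows
of `G`, i.e. iff `(G * Gᵀ) *ᵥ v = 0`. As `v ↦ v ᵥ* G` is injective, `C ⊓ dualCode C = ⊥` says
exactly that `G * Gᵀ` has trivial kernel. -/

section

variable {F : Type*} [Field F] {ι κ : Type*} [Fintype ι]

theorem mem_dualCode_span_range_iff (G : Matrix κ ι F) (x : ι → F) :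
    x ∈ dualCode (Submodule.span F (Set.range G)) ↔ G *ᵥ x = 0 := by
  constructor
  · intro hx
    ext i
    rw [mulVec, dotProduct_comm]
    exact hx _ (Submodule.subset_span ⟨i, rfl⟩)
  · intro hx c hc
    induction hc using Submodule.span_induction with
    | mem c hc =>
      obtain ⟨i, rfl⟩ := hc
      rw [dotProduct_comm]
      exact congrFun hx i
    | zero => exact dotProduct_zero x
    | add a b _ _ ha hb => rw [dotProduct_add, ha, hb, add_zero]
    | smul t a _ ha => rw [dotProduct_smul, ha, smul_zero]

variable [Fintype κ]

theorem mem_span_range_inf_dualCode_iff (G : Matrix κ ι F) (x : ι → F) :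
    x ∈ Submodule.span F (Set.range G) ⊓ dualCode (Submodule.span F (Set.range G)) ↔
      ∃ v, v ᵥ* G = x ∧ (G * Gᵀ) *ᵥ v = 0 := by
  have hspan : Submodule.span F (Set.range G) = LinearMap.range G.vecMulLinear :=
    (range_vecMulLinear G).symm
  rw [Submodule.mem_inf, mem_dualCode_span_range_iff, hspan]
  constructor
  · rintro ⟨⟨v, rfl⟩, hv⟩
    exact ⟨v, rfl, by rwa [← mulVec_mulVec, mulVec_transpose]⟩
  · rintro ⟨v, rfl, hv⟩
    exact ⟨⟨v, rfl⟩, by rwa [← mulVec_mulVec, mulVec_transpose] at hv⟩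

end

theorem lcd_iff_isUnit_det_mul_transpose_general
    {F : Type*} [Field F] {n k : ℕ}
    (C : Submodule F (Fin n → F)) (G : Matrix (Fin k) (Fin n) F)
    (hspan : Submodule.span F (Set.range G) = C)
    (hind : LinearIndependent F G) :
    C ⊓ dualCode C = ⊥ ↔ IsUnit (G * Gᵀ).det := by
  subst hspan
  have hinj : Function.Injective G.vecMul := vecMul_injective_iff.mpr hind
  rw [isUnit_iff_ne_zero, Ne, ← exists_mulVec_eq_zero_iff, Submodule.eq_bot_iff]
  simp only [mem_span_range_inf_dualCode_iff]
  constructor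
  · rintro hlcd ⟨v, hv0, hv⟩
    exact hv0 (hinj ((hlcd _ ⟨v, rfl, hv⟩).trans (zero_vecMul G).symm))
  · rintro hdet x ⟨v, rfl, hv⟩
    obtain rfl : v = 0 := by_contra fun hv0 => hdet ⟨v, hv0, hv⟩
    exact zero_vecMul G

theorem lcd_iff_isUnit_det_mul_transpose
    {F : Type*} [Field F] [Fintype F] {n k : ℕ}
    (C : Submodule F (Fin n → F)) (G : Matrix (Fin k) (Fin n) F)
    (hspan : Submodule.span F (Set.range G) = C)
    (hind : LinearIndependent F G) :
    C ⊓ dualCode C = ⊥ ↔ IsUnit (G * Gᵀ).det :=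
  lcd_iff_isUnit_det_mul_transpose_general C G hspan hind
end

section
/- Let C be an [n,k] code over F_q with generator matrix (I_k | A) and let x, y ∈ F_q^{n−k} with (x,x) = (y,y) = (x,y) = 0. Let C(A(x,y)) be the code with generator matrix (I_k | A(x,y)), where the i-th row of A(x,y) is r_i + (r_i,y)x − (r_i,x)y with r_i the i-th row of A. Then dim(Hull(C(A(x,y)))) = dim(Hull(C)). -/
open Matrix

/-- The matrix `A(x,y)` whose `i`-th row is `r_i + (r_i,y)x - (r_i,x)y`. -/
def rowOp {F : Type*} [Field F] {k m : ℕ} (A : Matrix (Fin k) (Fin m) F)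
    (x y : Fin m → F) : Matrix (Fin k) (Fin m) F :=
  Matrix.of fun i => A i + (A i ⬝ᵥ y) • x - (A i ⬝ᵥ x) • y

/-- The code with generator matrix `(I_k | A)`, i.e. the row span of that matrix. -/
def genCode {F : Type*} [Field F] {k m : ℕ} (A : Matrix (Fin k) (Fin m) F) :
    Submodule F (Fin k ⊕ Fin m → F) :=
  Submodule.span F (Set.range (Matrix.fromCols (1 : Matrix (Fin k) (Fin k) F) A))

/-! With `M = 1 + y xᵀ - x yᵀ` we have `A(x,y) = A M`, and the isotropy conditions on `x, y`
make `M` orthogonal. Hence `v ↦ v · diag(1, M)` is an isometry of `F^(k+m)` for the standard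
dot product carrying `C` onto `C(A(x,y))`, so it carries `Hull(C)` onto `Hull(C(A(x,y)))`. -/

def hull {F : Type*} [Field F] {ι : Type*} [Fintype ι] (C : Submodule F (ι → F)) :
    Submodule F (ι → F) :=
  C ⊓ dualCode C

section Isometry

variable {F : Type*} [Field F] {ι : Type*} [Fintype ι]

theorem dualCode_map_of_isometry (e : (ι → F) ≃ₗ[F] (ι → F))
    (he : ∀ v w, e v ⬝ᵥ e w = v ⬝ᵥ w) (C : Submodule F (ι → F)) :
    (dualCode C).map e.toLinearMap = dualCode (C.map e.toLinearMap) := by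
  ext w
  constructor
  · rintro ⟨u, hu, rfl⟩ _ ⟨c, hc, rfl⟩
    rw [LinearEquiv.coe_coe, he]
    exact hu c hc
  · intro hw
    refine ⟨e.symm w, fun c hc => ?_, e.apply_symm_apply w⟩
    rw [← he, e.apply_symm_apply]
    exact hw _ ⟨c, hc, rfl⟩

theorem finrank_hull_map_of_isometry (e : (ι → F) ≃ₗ[F] (ι → F))
    (he : ∀ v w, e v ⬝ᵥ e w = v ⬝ᵥ w) (C : Submodule F (ι → F)) :
    Module.finrank F (hull (C.map e.toLinearMap)) = Module.finrank F (hull C) := by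
  rw [hull, hull, ← dualCode_map_of_isometry e he, ← Submodule.map_inf _ e.injective]
  exact e.finrank_map_eq _

theorem span_range_mul {κ : Type*} (G : Matrix κ ι F) (Q : Matrix ι ι F) :
    Submodule.span F (Set.range (G * Q)) =
      (Submodule.span F (Set.range G)).map Q.vecMulLinear := by
  rw [Submodule.map_span]
  exact congrArg _ (Set.range_comp Q.vecMulLinear G)

variable [DecidableEq ι]

theorem vecMul_dotProduct_vecMul_of_mem_orthogonalGroup {Q : Matrix ι ι F}
    (hQ : Q ∈ orthogonalGroup ι F) (v w : ι → F) :
    (v ᵥ* Q) ⬝ᵥ (w ᵥ* Q) = v ⬝ᵥ w := by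
  rw [← dotProduct_mulVec, ← mulVec_transpose, mulVec_mulVec,
    (mem_orthogonalGroup_iff _ _).mp hQ, one_mulVec]

def vecMulEquivOfMemOrthogonalGroup {Q : Matrix ι ι F} (hQ : Q ∈ orthogonalGroup ι F) :
    (ι → F) ≃ₗ[F] (ι → F) :=
  LinearEquiv.ofLinearMap Q.vecMulLinear Qᵀ.vecMulLinear
    (LinearMap.ext fun v => by
      simp only [LinearMap.comp_apply, vecMulLinear_apply, vecMul_vecMul,
        (mem_orthogonalGroup_iff' _ _).mp hQ, vecMul_one, LinearMap.id_apply])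
    (LinearMap.ext fun v => by
      simp only [LinearMap.comp_apply, vecMulLinear_apply, vecMul_vecMul,
        (mem_orthogonalGroup_iff _ _).mp hQ, vecMul_one, LinearMap.id_apply])

theorem finrank_hull_span_range_mul {κ : Type*} (G : Matrix κ ι F) {Q : Matrix ι ι F}
    (hQ : Q ∈ orthogonalGroup ι F) :
    Module.finrank F (hull (Submodule.span F (Set.range (G * Q)))) =
      Module.finrank F (hull (Submodule.span F (Set.range G))) := by
  rw [span_range_mul]
  exact finrank_hull_map_of_isometry (vecMulEquivOfMemOrthogonalGroup hQ)
    (vecMul_dotProduct_vecMul_of_mem_orthogonalGroup hQ) _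

end Isometry

section GenCode

variable {F : Type*} [Field F] {k m : ℕ}

theorem finrank_hull_genCode_mul (A : Matrix (Fin k) (Fin m) F)
    {M : Matrix (Fin m) (Fin m) F} (hM : M ∈ orthogonalGroup (Fin m) F) :
    Module.finrank F (hull (genCode (A * M))) = Module.finrank F (hull (genCode A)) := by
  let Q : Matrix (Fin k ⊕ Fin m) (Fin k ⊕ Fin m) F := fromBlocks 1 0 0 M
  have hQ : Q ∈ orthogonalGroup (Fin k ⊕ Fin m) F := by
    rw [mem_orthogonalGroup_iff, fromBlocks_transpose, fromBlocks_multiply,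
      (mem_orthogonalGroup_iff _ _).mp hM]
    simp
  -- without the ascription, `*` elaborates to `CStarMatrix` multiplication
  have hG : fromCols 1 (A * M) = fromCols (1 : Matrix (Fin k) (Fin k) F) A * Q := by
    rw [fromCols_mul_fromBlocks]
    simp
  rw [genCode, genCode, hG]
  exact finrank_hull_span_range_mul _ hQ

def rowOpMatrix (x y : Fin m → F) : Matrix (Fin m) (Fin m) F :=
  1 + vecMulVec y x - vecMulVec x y

theorem rowOp_eq_mul (A : Matrix (Fin k) (Fin m) F) (x y : Fin m → F) :
    rowOp A x y = A * rowOpMatrix x y := by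
  ext1 i
  simp [rowOp, rowOpMatrix, mul_apply_eq_vecMul, vecMul_add, vecMul_sub, vecMul_vecMulVec]

theorem rowOpMatrix_mem_orthogonalGroup {x y : Fin m → F} (hx : x ⬝ᵥ x = 0)
    (hy : y ⬝ᵥ y = 0) (hxy : x ⬝ᵥ y = 0) :
    rowOpMatrix x y ∈ orthogonalGroup (Fin m) F := by
  have hyx : y ⬝ᵥ x = 0 := by rw [dotProduct_comm, hxy]
  rw [mem_orthogonalGroup_iff]
  simp only [rowOpMatrix, transpose_add, transpose_sub, transpose_one, transpose_vecMulVec,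
    add_mul, sub_mul, mul_add, mul_sub, one_mul, mul_one, vecMulVec_mul_vecMulVec,
    hx, hy, hxy, hyx, zero_smul, vecMulVec_zero]
  abel

end GenCode

theorem hull_dim_rowOp_eq_general
    {F : Type*} [Field F] {k m : ℕ}
    (A : Matrix (Fin k) (Fin m) F) (x y : Fin m → F)
    (hx : x ⬝ᵥ x = 0) (hy : y ⬝ᵥ y = 0) (hxy : x ⬝ᵥ y = 0) :
    Module.finrank F ↥(genCode (rowOp A x y) ⊓ dualCode (genCode (rowOp A x y))) =
      Module.finrank F ↥(genCode A ⊓ dualCode (genCode A)) := by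
  rw [rowOp_eq_mul]
  exact finrank_hull_genCode_mul A (rowOpMatrix_mem_orthogonalGroup hx hy hxy)

theorem hull_dim_rowOp_eq
    {F : Type*} [Field F] [Fintype F] {k m : ℕ}
    (A : Matrix (Fin k) (Fin m) F) (x y : Fin m → F)
    (hx : x ⬝ᵥ x = 0) (hy : y ⬝ᵥ y = 0) (hxy : x ⬝ᵥ y = 0) :
    Module.finrank F ↥(genCode (rowOp A x y) ⊓ dualCode (genCode (rowOp A x y))) =
      Module.finrank F ↥(genCode A ⊓ dualCode (genCode A)) :=
  hull_dim_rowOp_eq_general A x y hx hy hxy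
end

section
/- Let C be an [n,k] code over F_q with generator matrix (I_k | A) and let x, y ∈ F_q^{n−k} with (x,x) = (y,y) = (x,y) = 0. Then the code C(A(x,y)) with generator matrix (I_k | A(x,y)) is self-orthogonal if and only if C is self-orthogonal. -/
/-! The code generated by `(I | A)` is self-orthogonal iff its Gram matrix `I + A Aᵀ` vanishes.
When `x, y` span a totally isotropic subspace, the row map `u ↦ u + (u,y)x - (u,x)y` preserves
the inner product, so `A(x,y) A(x,y)ᵀ = A Aᵀ` and both conditions coincide. -/

open Matrix

theorem fromCols_one_dotProduct_fromCols_one {R n m : Type*} [CommSemiring R] [Fintype n]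
    [DecidableEq n] [Fintype m] (A : Matrix n m R) (i j : n) :
    fromCols (1 : Matrix n n R) A i ⬝ᵥ fromCols 1 A j = (1 + A * Aᵀ : Matrix n n R) i j := by
  rw [dotProduct, Fintype.sum_sum_type]
  simp only [fromCols_apply_inl, fromCols_apply_inr, Matrix.add_apply, Matrix.mul_apply']
  congr 1
  simp [Matrix.one_apply]

section SelfOrthogonal

variable {F : Type*} [Field F]

theorem mem_dualCode_span_iff {ι : Type*} [Fintype ι] {S : Set (ι → F)} {a : ι → F} :
    a ∈ dualCode (Submodule.span F S) ↔ ∀ b ∈ S, a ⬝ᵥ b = 0 := by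
  refine ⟨fun h b hb => h b (Submodule.subset_span hb), fun h c hc => ?_⟩
  have hS : S ⊆ LinearMap.ker (dotProductBilin F F a) := fun b hb => h b hb
  exact (Submodule.span_le.2 hS) hc

theorem span_le_dualCode_span_iff {ι : Type*} [Fintype ι] {S : Set (ι → F)} :
    Submodule.span F S ≤ dualCode (Submodule.span F S) ↔
      ∀ a ∈ S, ∀ b ∈ S, a ⬝ᵥ b = 0 := by
  simp only [Submodule.span_le, Set.subset_def, SetLike.mem_coe, mem_dualCode_span_iff]

theorem genCode_le_dualCode_iff {k m : ℕ} {A : Matrix (Fin k) (Fin m) F} :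
    genCode A ≤ dualCode (genCode A) ↔ 1 + A * Aᵀ = 0 := by
  rw [genCode, span_le_dualCode_span_iff, ← Matrix.ext_iff]
  refine Set.forall_mem_range.trans <| forall_congr' fun i => Set.forall_mem_range.trans ?_
  simp only [fromCols_one_dotProduct_fromCols_one, Matrix.zero_apply]

end SelfOrthogonal

theorem dotProduct_shear_shear {R ι : Type*} [CommRing R] [Fintype ι] {x y : ι → R}
    (hx : x ⬝ᵥ x = 0) (hy : y ⬝ᵥ y = 0) (hxy : x ⬝ᵥ y = 0) (u v : ι → R) :
    (u + (u ⬝ᵥ y) • x - (u ⬝ᵥ x) • y) ⬝ᵥ (v + (v ⬝ᵥ y) • x - (v ⬝ᵥ x) • y) = u ⬝ᵥ v := by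
  have hyx : y ⬝ᵥ x = 0 := by rwa [dotProduct_comm]
  simp only [sub_dotProduct, add_dotProduct, dotProduct_sub, dotProduct_add, smul_dotProduct,
    dotProduct_smul, hx, hy, hxy, hyx, smul_eq_mul]
  rw [dotProduct_comm x v, dotProduct_comm y v]
  ring

theorem rowOp_mul_transpose_self {F : Type*} [Field F] {k m : ℕ} (A : Matrix (Fin k) (Fin m) F)
    {x y : Fin m → F} (hx : x ⬝ᵥ x = 0) (hy : y ⬝ᵥ y = 0) (hxy : x ⬝ᵥ y = 0) :
    rowOp A x y * (rowOp A x y)ᵀ = A * Aᵀ := by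
  ext i j
  simp only [Matrix.mul_apply', transpose_apply]
  exact dotProduct_shear_shear hx hy hxy (A i) (A j)

theorem rowOp_selfOrthogonal_iff_general
    {F : Type*} [Field F] {k m : ℕ}
    (A : Matrix (Fin k) (Fin m) F) (x y : Fin m → F)
    (hx : x ⬝ᵥ x = 0) (hy : y ⬝ᵥ y = 0) (hxy : x ⬝ᵥ y = 0) :
    genCode (rowOp A x y) ≤ dualCode (genCode (rowOp A x y)) ↔
      genCode A ≤ dualCode (genCode A) := by
  rw [genCode_le_dualCode_iff, genCode_le_dualCode_iff, rowOp_mul_transpose_self A hx hy hxy]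

theorem rowOp_selfOrthogonal_iff
    {F : Type*} [Field F] [Fintype F] {k m : ℕ}
    (A : Matrix (Fin k) (Fin m) F) (x y : Fin m → F)
    (hx : x ⬝ᵥ x = 0) (hy : y ⬝ᵥ y = 0) (hxy : x ⬝ᵥ y = 0) :
    genCode (rowOp A x y) ≤ dualCode (genCode (rowOp A x y)) ↔
      genCode A ≤ dualCode (genCode A) :=
  rowOp_selfOrthogonal_iff_general A x y hx hy hxy
end

section
/- Let A be a k×(n−k) binary matrix with rows r_1,…,r_k, and let x, y ∈ F_2^{n−k} satisfy wt(x) ≡ 0 (mod 4), wt(y) ≡ 0 (mod 4), and (x,y) = 0. Let r_i' = r_i + (r_i,y)x − (r_i,x)y be the i-th row of A(x,y). Then wt(r_i') ≡ wt(r_i) (mod 4) for all i. -/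
open Matrix

/-- Hamming weight of a vector. -/
def hwt {ι : Type*} [Fintype ι] {F : Type*} [Zero F] [DecidableEq F] (x : ι → F) : ℕ :=
  (Finset.univ.filter fun i => x i ≠ 0).card

/-!
Over `𝔽₂`, `wt (a + b) = wt a + wt b - 2 wt (a * b)`, and `(a, b) ≡ wt (a * b) (mod 2)`; hence
`wt (a + b) ≡ wt a + wt b (mod 4)` whenever `(a, b) = 0`. Row `r` of `A(x,y)` is `r + v` with
`v = (r,y) x + (r,x) y`, which is one of `0, x, y, x + y`, so `wt v ≡ 0 (mod 4)`, and
`(r, v) = 2 (r,x)(r,y) = 0`.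
-/

variable {ι : Type*} [Fintype ι]

theorem hwt_add_add_two_mul_hwt_mul (a b : ι → ZMod 2) :
    hwt (a + b) + 2 * hwt (a * b) = hwt a + hwt b := by
  have pointwise : ∀ u v : ZMod 2,
      ((if u + v ≠ 0 then 1 else 0) + 2 * (if u * v ≠ 0 then 1 else 0) : ℕ)
        = (if u ≠ 0 then 1 else 0) + (if v ≠ 0 then 1 else 0) := by
    decide
  simp only [hwt, Finset.card_filter, Finset.mul_sum, ← Finset.sum_add_distrib]
  exact Finset.sum_congr rfl fun i _ => pointwise (a i) (b i)

theorem sum_eq_cast_hwt (v : ι → ZMod 2) : ∑ i, v i = (hwt v : ZMod 2) := by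
  have pointwise : ∀ u : ZMod 2, u = ((if u ≠ 0 then 1 else 0 : ℕ) : ZMod 2) := by decide
  rw [hwt, Finset.card_filter, Nat.cast_sum]
  exact Finset.sum_congr rfl fun i _ => pointwise (v i)

theorem hwt_add_mod_four_of_dotProduct_eq_zero {a b : ι → ZMod 2} (h : a ⬝ᵥ b = 0) :
    hwt (a + b) % 4 = (hwt a + hwt b) % 4 := by
  have heven : 2 ∣ hwt (a * b) := by
    rw [← ZMod.natCast_eq_zero_iff, ← sum_eq_cast_hwt]
    exact h
  have := hwt_add_add_two_mul_hwt_mul a b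
  omega

theorem hwt_smul_add_smul_mod_four {x y : ι → ZMod 2} (hx : hwt x % 4 = 0)
    (hy : hwt y % 4 = 0) (hxy : x ⬝ᵥ y = 0) (s t : ZMod 2) :
    hwt (s • x + t • y) % 4 = 0 := by
  have hwt_add : hwt (x + y) % 4 = 0 := by
    rw [hwt_add_mod_four_of_dotProduct_eq_zero hxy]
    omega
  obtain rfl | rfl : s = 0 ∨ s = 1 := by decide +revert
  all_goals obtain rfl | rfl : t = 0 ∨ t = 1 := by decide +revert
  all_goals simp_all [hwt]

theorem hwt_rowOp_congr_mod_four {k m : ℕ}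
    (A : Matrix (Fin k) (Fin m) (ZMod 2)) (x y : Fin m → ZMod 2)
    (hx : hwt x % 4 = 0) (hy : hwt y % 4 = 0) (hxy : x ⬝ᵥ y = 0) :
    ∀ i, hwt (rowOp A x y i) % 4 = hwt (A i) % 4 := by
  intro i
  let v := (A i ⬝ᵥ y) • x + (A i ⬝ᵥ x) • y
  have hrow : rowOp A x y i = A i + v := by
    funext j
    simp only [rowOp, of_apply, v, Pi.add_apply, Pi.sub_apply, CharTwo.sub_eq_add, add_assoc]
  have hdot : A i ⬝ᵥ v = 0 := by
    simp only [v, dotProduct_add, dotProduct_smul, smul_eq_mul, mul_comm (A i ⬝ᵥ y),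
      CharTwo.add_self_eq_zero]
  have hv : hwt v % 4 = 0 := hwt_smul_add_smul_mod_four hx hy hxy _ _
  rw [hrow, hwt_add_mod_four_of_dotProduct_eq_zero hdot]
  omega
end

section
/- Let C be a binary [n,k] code with generator matrix (I_k | A) and let x, y ∈ F_2^{n−k} with wt(x) ≡ wt(y) ≡ 0 (mod 4) and (x,y) = 0. Then the code C(A(x,y)) with generator matrix (I_k | A(x,y)) is doubly even if and only if C is doubly even. -/
open Matrix

/-!
Over `F_2`, `wt(a + b) = wt a + wt b - 2 |supp a ∩ supp b|` and `|supp a ∩ supp b| ≡ (a,b) mod 2`,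
so weights add modulo 4 on orthogonal vectors; in particular the span of `x` and `y` is doubly
even. The codeword `(u, u A(x,y))` of `C(A(x,y))` is `(u, w + v)` with `w = u A` and
`v = (w,y)x + (w,x)y`. Since `(w,v) = 2 (w,x)(w,y) = 0` and `v` lies in the span of `x` and `y`,
it has the same weight modulo 4 as the codeword `(u, w)` of `C`.
-/

section Weight

variable {ι : Type*} [Fintype ι]

lemma hwt_sum_elim {κ F : Type*} [Fintype κ] [Zero F] [DecidableEq F] (a : ι → F)
    (b : κ → F) : hwt (Sum.elim a b) = hwt a + hwt b := by
  classical
  simp only [hwt, ← Finset.card_toLeft_add_card_toRight]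
  congr 2 <;> ext <;> simp

lemma hwt_smul {F : Type*} [Field F] [DecidableEq F] {s : F} (hs : s ≠ 0) (x : ι → F) :
    hwt (s • x) = hwt x :=
  hammingNorm_smul (fun _ => .of_ne_zero hs) x

lemma hwt_eq_sum_val (a : ι → ZMod 2) : hwt a = ∑ i, (a i).val := by
  rw [hwt, Finset.card_filter]
  refine Finset.sum_congr rfl fun i _ => ?_
  generalize a i = z
  revert z
  decide

lemma dotProduct_eq_sum_val (a b : ι → ZMod 2) :
    a ⬝ᵥ b = ((∑ i, (a i).val * (b i).val : ℕ) : ZMod 2) := by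
  simp [dotProduct]

lemma hwt_add_add_two_mul (a b : ι → ZMod 2) :
    hwt (a + b) + 2 * ∑ i, (a i).val * (b i).val = hwt a + hwt b := by
  have hval : ∀ z w : ZMod 2, (z + w).val + 2 * (z.val * w.val) = z.val + w.val := by decide
  simp only [hwt_eq_sum_val, Finset.mul_sum, ← Finset.sum_add_distrib, Pi.add_apply, hval]

lemma hwt_add_modEq {a b : ι → ZMod 2} (h : a ⬝ᵥ b = 0) :
    hwt (a + b) ≡ hwt a + hwt b [MOD 4] := by
  rw [dotProduct_eq_sum_val, ZMod.natCast_eq_zero_iff] at h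
  obtain ⟨t, ht⟩ := h
  have := hwt_add_add_two_mul a b
  unfold Nat.ModEq
  omega

lemma hwt_smul_modEq_zero {F : Type*} [Field F] [DecidableEq F] (s : F) {x : ι → F}
    (hx : hwt x ≡ 0 [MOD 4]) : hwt (s • x) ≡ 0 [MOD 4] := by
  rcases eq_or_ne s 0 with rfl | hs
  · simp [hwt, Nat.ModEq]
  · rwa [hwt_smul hs]

lemma hwt_smul_add_smul_modEq_zero {x y : ι → ZMod 2} (hx : hwt x ≡ 0 [MOD 4])
    (hy : hwt y ≡ 0 [MOD 4]) (hxy : x ⬝ᵥ y = 0) (s t : ZMod 2) :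
    hwt (s • x + t • y) ≡ 0 [MOD 4] :=
  calc hwt (s • x + t • y) ≡ hwt (s • x) + hwt (t • y) [MOD 4] :=
        hwt_add_modEq (by simp [dotProduct_smul, smul_dotProduct, hxy])
    _ ≡ 0 + 0 [MOD 4] := (hwt_smul_modEq_zero s hx).add (hwt_smul_modEq_zero t hy)

lemma hwt_add_smul_sub_smul_modEq {x y : ι → ZMod 2} (hx : hwt x ≡ 0 [MOD 4])
    (hy : hwt y ≡ 0 [MOD 4]) (hxy : x ⬝ᵥ y = 0) (w : ι → ZMod 2) :
    hwt (w + (w ⬝ᵥ y) • x - (w ⬝ᵥ x) • y) ≡ hwt w [MOD 4] := by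
  set v := (w ⬝ᵥ y) • x + (w ⬝ᵥ x) • y
  have hv : w + (w ⬝ᵥ y) • x - (w ⬝ᵥ x) • y = w + v := by
    rw [sub_eq_add_neg, ZModModule.neg_eq_self, add_assoc]
  have hwv : w ⬝ᵥ v = 0 := by
    simp only [v, dotProduct_add, dotProduct_smul, smul_eq_mul, mul_comm (w ⬝ᵥ x)]
    exact CharTwo.add_self_eq_zero _
  calc hwt (w + (w ⬝ᵥ y) • x - (w ⬝ᵥ x) • y) = hwt (w + v) := by rw [hv]
    _ ≡ hwt w + hwt v [MOD 4] := hwt_add_modEq hwv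
    _ ≡ hwt w + 0 [MOD 4] := (hwt_smul_add_smul_modEq_zero hx hy hxy _ _).add_left _

end Weight

lemma vecMul_rowOp {F : Type*} [Field F] {k m : ℕ} (A : Matrix (Fin k) (Fin m) F)
    (x y : Fin m → F) (u : Fin k → F) :
    u ᵥ* rowOp A x y = u ᵥ* A + ((u ᵥ* A) ⬝ᵥ y) • x - ((u ᵥ* A) ⬝ᵥ x) • y := by
  have h : rowOp A x y = A + vecMulVec (A *ᵥ y) x - vecMulVec (A *ᵥ x) y := by
    ext i j
    simp [rowOp, vecMulVec_apply, mulVec, dotProduct_comm]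
  rw [h, vecMul_sub, vecMul_add, vecMul_vecMulVec, vecMul_vecMulVec, dotProduct_mulVec,
    dotProduct_mulVec]

lemma mem_genCode_iff {F : Type*} [Field F] {k m : ℕ} (A : Matrix (Fin k) (Fin m) F)
    (c : Fin k ⊕ Fin m → F) : c ∈ genCode A ↔ ∃ u, Sum.elim u (u ᵥ* A) = c := by
  change c ∈ Submodule.span F (Set.range (fromCols 1 A).row) ↔ _
  rw [← range_vecMulLinear]
  simp [vecMul_fromCols]

def IsDoublyEven {ι : Type*} [Fintype ι] (C : Submodule (ZMod 2) (ι → ZMod 2)) : Prop :=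
  ∀ c ∈ C, hwt c ≡ 0 [MOD 4]

lemma isDoublyEven_genCode_iff {k m : ℕ} (A : Matrix (Fin k) (Fin m) (ZMod 2)) :
    IsDoublyEven (genCode A) ↔ ∀ u, hwt u + hwt (u ᵥ* A) ≡ 0 [MOD 4] := by
  simp only [IsDoublyEven, mem_genCode_iff, forall_exists_index, forall_apply_eq_imp_iff,
    hwt_sum_elim]

theorem rowOp_doublyEven_iff {k m : ℕ}
    (A : Matrix (Fin k) (Fin m) (ZMod 2)) (x y : Fin m → ZMod 2)
    (hx : hwt x % 4 = 0) (hy : hwt y % 4 = 0) (hxy : x ⬝ᵥ y = 0) :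
    (∀ c ∈ genCode (rowOp A x y), hwt c % 4 = 0) ↔
      (∀ c ∈ genCode A, hwt c % 4 = 0) := by
  change IsDoublyEven _ ↔ IsDoublyEven _
  simp only [isDoublyEven_genCode_iff, vecMul_rowOp]
  refine forall_congr' fun u => ?_
  exact ((hwt_add_smul_sub_smul_modEq hx hy hxy _).add_left _).congr_left
end
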